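/- arXiv:math/0306314 — 7 statements merged into one kernel-verified Lean document; each statement's English description precedes it below -/
import Mathlib

section
/- For every x = (x₁,…,xₙ) on the unit sphere of ℝⁿ (i.e. Σ xᵢ² = 1) and n ≥ 2, the normalized exponential average satisfies (1/n)·Σᵢ exp((xᵢ²/2)·log n) ≤ 2. Consequently the ψ₂-norm of x with respect to the uniform probability measure on {1,…,n} is at most √(2/log n). -/
/-!
Put `c = log n / 2`. Since `t = xᵢ² ∈ [0, 1]`, convexity of `exp` bounds `exp (t c)` by the chord
`1 + t (exp c - 1)`; summing over `i` and using `∑ xᵢ² = 1` gives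
`∑ᵢ exp (xᵢ² c) ≤ n + √n - 1 ≤ 2n`. As `2 ≤ e`, the level `λ = √(2 / log n)` is then admissible
in the definition of the ψ₂-norm.
-/

/-- The ψ₂-norm of a function on `{1,…,n}` with the uniform probability measure. -/
noncomputable def psi2Norm (n : ℕ) (f : Fin n → ℝ) : ℝ :=
  sInf {l : ℝ | 0 < l ∧ (1 / n) * ∑ i, Real.exp (f i ^ 2 / l ^ 2) ≤ Real.exp 1}

open Real

lemma exp_mul_le_one_add_mul_sub_one {t : ℝ} (ht₀ : 0 ≤ t) (ht₁ : t ≤ 1) (c : ℝ) :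
    exp (t * c) ≤ 1 + t * (exp c - 1) := by
  have h := convexOn_exp.2 (Set.mem_univ 0) (Set.mem_univ c) (sub_nonneg.2 ht₁) ht₀
    (sub_add_cancel 1 t)
  simp only [smul_eq_mul, mul_zero, zero_add, exp_zero, mul_one] at h
  linarith

lemma sum_exp_sq_mul_le {ι : Type*} [Fintype ι] {x : ι → ℝ} (hx : ∑ i, x i ^ 2 = 1) (c : ℝ) :
    ∑ i, exp (x i ^ 2 * c) ≤ Fintype.card ι + (exp c - 1) := by
  have hx₁ (i : ι) : x i ^ 2 ≤ 1 :=
    hx ▸ Finset.single_le_sum (fun j _ ↦ sq_nonneg (x j)) (Finset.mem_univ i)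
  calc ∑ i, exp (x i ^ 2 * c)
      ≤ ∑ i, (1 + x i ^ 2 * (exp c - 1)) :=
        Finset.sum_le_sum fun i _ ↦ exp_mul_le_one_add_mul_sub_one (sq_nonneg _) (hx₁ i) c
    _ = Fintype.card ι + (exp c - 1) := by
        simp [Finset.sum_add_distrib, ← Finset.sum_mul, hx]

lemma psi2Norm_le {n : ℕ} {f : Fin n → ℝ} {l : ℝ} (hl : 0 < l)
    (hf : (1 / n) * ∑ i, exp (f i ^ 2 / l ^ 2) ≤ exp 1) : psi2Norm n f ≤ l :=
  csInf_le ⟨0, fun _ hl' ↦ hl'.1.le⟩ ⟨hl, hf⟩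

theorem sphere_psi2_bound (n : ℕ) (hn : 2 ≤ n) (x : Fin n → ℝ)
    (hx : ∑ i, x i ^ 2 = 1) :
    (1 / n) * ∑ i, Real.exp ((x i ^ 2 / 2) * Real.log n) ≤ 2 ∧
      psi2Norm n x ≤ Real.sqrt (2 / Real.log n) := by
  have hn₀ : (0 : ℝ) < n := by positivity
  have hlog : 0 < log n := log_pos (by exact_mod_cast hn)
  have hsum : ∑ i, exp ((x i ^ 2 / 2) * log n) ≤ n + (n - 1) :=
    calc ∑ i, exp ((x i ^ 2 / 2) * log n)
        = ∑ i, exp (x i ^ 2 * (log n / 2)) := by simp only [div_mul_eq_mul_div, mul_div_assoc]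
      _ ≤ Fintype.card (Fin n) + (exp (log n / 2) - 1) := sum_exp_sq_mul_le hx _
      _ ≤ n + (exp (log n) - 1) := by
          rw [Fintype.card_fin]
          gcongr
          exact half_le_self hlog.le
      _ = n + (n - 1) := by rw [exp_log hn₀]
  have havg : (1 / n) * ∑ i, exp ((x i ^ 2 / 2) * log n) ≤ 2 := by
    rw [one_div_mul_eq_div, div_le_iff₀ hn₀]
    linarith
  refine ⟨havg, psi2Norm_le (sqrt_pos.2 (by positivity)) ?_⟩
  rw [sq_sqrt (by positivity)]
  simp_rw [div_div_eq_mul_div, ← div_mul_eq_mul_div]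
  linarith [add_one_le_exp 1]
end

section
/- Let X be a normed space, x₁,…,xₙ ∈ B_X, and ε > 0. If the set {x₁,…,xₙ} is ε-shattered by the dual unit ball B_{X*} (viewed as a class of functions on B_X), then for all real scalars a₁,…,aₙ one has ε·Σᵢ|aᵢ| ≤ ‖Σᵢ aᵢxᵢ‖. -/
/-!
Let `S` be the set of indices with `aᵢ < 0`, and subtract the shattering functional for `Sᶜ`
from the one for `S`. The difference `ψ` has norm at most `2`, and `ψ (xᵢ)` has the sign of `aᵢ`
with `|ψ (xᵢ)| ≥ 2ε`. Hence `2ε ∑ |aᵢ| ≤ ψ (∑ aᵢ xᵢ) ≤ 2 ‖∑ aᵢ xᵢ‖`.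
-/

/-- The points `x 0, …, x (n-1)` are `ε`-shattered by the unit ball of the dual space:
there is a level function `h` such that for every subset `S` there is a functional of
norm at most one which is below `h - ε` on `S` and above `h + ε` off `S`. -/
def ShatteredByDualBall {X : Type*} [NormedAddCommGroup X] [NormedSpace ℝ X]
    {n : ℕ} (x : Fin n → X) (ε : ℝ) : Prop :=
  ∃ h : Fin n → ℝ, ∀ S : Finset (Fin n), ∃ φ : X →L[ℝ] ℝ, ‖φ‖ ≤ 1 ∧
    ∀ i, (i ∈ S → φ (x i) ≤ h i - ε) ∧ (i ∉ S → h i + ε ≤ φ (x i))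

lemma mul_abs_le_mul_of_sign {a t c : ℝ} (hneg : a < 0 → t ≤ -c) (hnonneg : 0 ≤ a → c ≤ t) :
    c * |a| ≤ a * t := by
  rcases lt_or_ge a 0 with ha | ha
  · rw [abs_of_neg ha]
    nlinarith [hneg ha]
  · rw [abs_of_nonneg ha]
    nlinarith [hnonneg ha]

lemma ContinuousLinearMap.mul_sum_abs_le_mul_norm_sum {ι X : Type*} [Fintype ι]
    [SeminormedAddCommGroup X] [NormedSpace ℝ X] (ψ : X →L[ℝ] ℝ) {C c : ℝ} (hψ : ‖ψ‖ ≤ C)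
    (x : ι → X) (a : ι → ℝ) (h : ∀ i, c * |a i| ≤ a i * ψ (x i)) :
    c * ∑ i, |a i| ≤ C * ‖∑ i, a i • x i‖ :=
  calc c * ∑ i, |a i|
      ≤ ∑ i, a i * ψ (x i) := by
        rw [Finset.mul_sum]
        exact Finset.sum_le_sum fun i _ => h i
    _ = ψ (∑ i, a i • x i) := by simp only [map_sum, map_smul, smul_eq_mul]
    _ ≤ ‖ψ‖ * ‖∑ i, a i • x i‖ := (le_abs_self _).trans (ψ.le_opNorm _)
    _ ≤ C * ‖∑ i, a i • x i‖ := by gcongr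

lemma ShatteredByDualBall.exists_norm_le_two_separating {X : Type*} [NormedAddCommGroup X]
    [NormedSpace ℝ X] {n : ℕ} {x : Fin n → X} {ε : ℝ} (hsh : ShatteredByDualBall x ε)
    (S : Finset (Fin n)) :
    ∃ ψ : X →L[ℝ] ℝ, ‖ψ‖ ≤ 2 ∧
      ∀ i, (i ∈ S → ψ (x i) ≤ -(2 * ε)) ∧ (i ∉ S → 2 * ε ≤ ψ (x i)) := by
  obtain ⟨h, hh⟩ := hsh
  obtain ⟨φ₁, hφ₁, hsep₁⟩ := hh S
  obtain ⟨φ₂, hφ₂, hsep₂⟩ := hh Sᶜ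
  refine ⟨φ₁ - φ₂, (norm_sub_le _ _).trans (by linarith), fun i => ⟨fun hi => ?_, fun hi => ?_⟩⟩
  · have h₁ := (hsep₁ i).1 hi
    have h₂ := (hsep₂ i).2 (Finset.notMem_compl.2 hi)
    rw [sub_apply]
    linarith
  · have h₁ := (hsep₁ i).2 hi
    have h₂ := (hsep₂ i).1 (Finset.mem_compl.2 hi)
    rw [sub_apply]
    linarith

theorem shattered_dominates_l1_general {X : Type*} [NormedAddCommGroup X] [NormedSpace ℝ X]
    {n : ℕ} (x : Fin n → X) (ε : ℝ)
    (hsh : ShatteredByDualBall x ε) :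
    ∀ a : Fin n → ℝ, ε * ∑ i, |a i| ≤ ‖∑ i, a i • x i‖ := by
  intro a
  obtain ⟨ψ, hψ, hsep⟩ := hsh.exists_norm_le_two_separating (Finset.univ.filter (a · < 0))
  have hsign : ∀ i, 2 * ε * |a i| ≤ a i * ψ (x i) := fun i =>
    mul_abs_le_mul_of_sign (fun ha => (hsep i).1 (by simpa using ha))
      (fun ha => (hsep i).2 (by simpa using ha))
  have := ψ.mul_sum_abs_le_mul_norm_sum hψ x a hsign
  rw [mul_assoc] at this
  linarith

theorem shattered_dominates_l1 {X : Type*} [NormedAddCommGroup X] [NormedSpace ℝ X]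
    {n : ℕ} (x : Fin n → X) (hx : ∀ i, ‖x i‖ ≤ 1) (ε : ℝ) (hε : 0 < ε)
    (hsh : ShatteredByDualBall x ε) :
    ∀ a : Fin n → ℝ, ε * ∑ i, |a i| ≤ ‖∑ i, a i • x i‖ :=
  shattered_dominates_l1_general x ε hsh
end

section
/- Let X be a normed space and x₁,…,xₙ ∈ B_X. The set {x₁,…,xₙ} is ε-shattered by the dual unit ball B_{X*} if and only if for all real scalars a₁,…,aₙ, ε·Σᵢ|aᵢ| ≤ ‖Σᵢ aᵢxᵢ‖ (in particular the xᵢ are linearly independent and, since xᵢ ∈ B_X, also ‖Σᵢ aᵢxᵢ‖ ≤ Σᵢ|aᵢ|). -/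
set_option maxHeartbeats 1000000


theorem shattered_iff_dominates_l1 {X : Type*} [NormedAddCommGroup X] [NormedSpace ℝ X]
    {n : ℕ} (x : Fin n → X) (hx : ∀ i, ‖x i‖ ≤ 1) (ε : ℝ) (hε : 0 < ε) :
    ShatteredByDualBall x ε ↔
      ∀ a : Fin n → ℝ, ε * ∑ i, |a i| ≤ ‖∑ i, a i • x i‖ := by
  constructor
  · rintro ⟨h, H⟩ a
    set S : Finset (Fin n) := Finset.univ.filter (fun i => 0 ≤ a i) with hS
    obtain ⟨φ₁, hφ₁, h1⟩ := H Sᶜ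
    obtain ⟨φ₂, hφ₂, h2⟩ := H S
    set ψ : X →L[ℝ] ℝ := (1/2 : ℝ) • (φ₁ - φ₂) with hψ
    have hψn : ‖ψ‖ ≤ 1 := by
      have hsub : ‖φ₁ - φ₂‖ ≤ 2 := by
        have := norm_sub_le φ₁ φ₂
        linarith
      have heq : ‖ψ‖ ≤ ‖(1/2 : ℝ)‖ * ‖φ₁ - φ₂‖ := ContinuousLinearMap.opNorm_smul_le _ _
      rw [Real.norm_eq_abs, abs_of_pos (by norm_num : (0:ℝ) < 1/2)] at heq
      linarith
    have key : ∀ i, ε * |a i| ≤ a i * ψ (x i) := by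
      intro i
      by_cases hi : 0 ≤ a i
      · have hiS : i ∈ S := by simp [hS, hi]
        have e1 := (h1 i).2 (by simpa using hiS)
        have e2 := (h2 i).1 hiS
        have hε' : ε ≤ ψ (x i) := by
          simp only [hψ, ContinuousLinearMap.smul_apply, ContinuousLinearMap.sub_apply,
            smul_eq_mul]
          linarith
        rw [abs_of_nonneg hi]
        nlinarith
      · push_neg at hi
        have hiS : i ∉ S := by simp [hS]; linarith
        have e1 := (h1 i).1 (by simpa using hiS)
        have e2 := (h2 i).2 hiS
        have hε' : ψ (x i) ≤ -ε := by
          simp only [hψ, ContinuousLinearMap.smul_apply, ContinuousLinearMap.sub_apply,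
            smul_eq_mul]
          linarith
        rw [abs_of_neg hi]
        nlinarith
    calc ε * ∑ i, |a i| = ∑ i, ε * |a i| := by rw [Finset.mul_sum]
      _ ≤ ∑ i, a i * ψ (x i) := Finset.sum_le_sum fun i _ => key i
      _ = ψ (∑ i, a i • x i) := by rw [map_sum]; simp [mul_comm]
      _ ≤ ‖ψ (∑ i, a i • x i)‖ := le_abs_self _
      _ ≤ ‖ψ‖ * ‖∑ i, a i • x i‖ := ψ.le_opNorm _
      _ ≤ 1 * ‖∑ i, a i • x i‖ := by gcongr
      _ = ‖∑ i, a i • x i‖ := one_mul _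
  · intro hdom
    refine ⟨0, fun S => ?_⟩
    have li : LinearIndependent ℝ x := by
      rw [Fintype.linearIndependent_iff]
      intro g hg i
      have h1 := hdom g
      rw [hg, norm_zero] at h1
      have h2 : (0:ℝ) ≤ ∑ j, |g j| := Finset.sum_nonneg fun j _ => abs_nonneg (g j)
      have h3 : ∑ j, |g j| = 0 := by nlinarith
      have h4 := (Finset.sum_eq_zero_iff_of_nonneg (fun j _ => abs_nonneg (g j))).mp h3
      exact abs_eq_zero.mp (h4 i (Finset.mem_univ i))
    set b := Module.Basis.span li with hb
    set s : Fin n → ℝ := fun i => if i ∈ S then -ε else ε with hs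
    set f₀ : Submodule.span ℝ (Set.range x) →ₗ[ℝ] ℝ := b.constr ℝ s with hf₀
    have hbd : ∀ y : Submodule.span ℝ (Set.range x), ‖f₀ y‖ ≤ 1 * ‖y‖ := by
      intro y
      have hy : ∑ i, b.repr y i • b i = y := b.sum_repr y
      have hval : f₀ y = ∑ i, b.repr y i * s i := by
        conv_lhs => rw [← hy]
        rw [map_sum]
        refine Finset.sum_congr rfl fun i _ => ?_
        rw [map_smul, hf₀, Module.Basis.constr_basis, smul_eq_mul]
      have hycoe : (y : X) = ∑ i, b.repr y i • x i := by
        conv_lhs => rw [← hy]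
        push_cast
        refine Finset.sum_congr rfl fun i _ => ?_
        rw [hb, Module.Basis.span_apply]
      have hbnd := hdom fun i => b.repr y i
      rw [← hycoe] at hbnd
      have habs : |f₀ y| ≤ ε * ∑ i, |b.repr y i| := by
        rw [hval]
        calc |∑ i, b.repr y i * s i| ≤ ∑ i, |b.repr y i * s i| :=
              Finset.abs_sum_le_sum_abs _ _
          _ = ∑ i, |b.repr y i| * ε := by
              refine Finset.sum_congr rfl fun i _ => ?_
              rw [abs_mul]
              congr 1
              simp only [hs]
              split <;> simp [abs_of_pos hε]
          _ = ε * ∑ i, |b.repr y i| := by rw [← Finset.sum_mul, mul_comm]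
      calc ‖f₀ y‖ = |f₀ y| := rfl
        _ ≤ ε * ∑ i, |b.repr y i| := habs
        _ ≤ ‖(y : X)‖ := hbnd
        _ = 1 * ‖y‖ := (one_mul _).symm
    set f : Submodule.span ℝ (Set.range x) →L[ℝ] ℝ := f₀.mkContinuous 1 hbd with hf
    obtain ⟨φ, hφext, hφnorm⟩ := exists_extension_norm_eq _ f
    have hfn : ‖f‖ ≤ 1 := f₀.mkContinuous_norm_le zero_le_one hbd
    refine ⟨φ, hφnorm ▸ hfn, fun i => ?_⟩
    have hmem : x i ∈ Submodule.span ℝ (Set.range x) := Submodule.subset_span ⟨i, rfl⟩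
    have hvi : φ (x i) = s i := by
      have hbi : (⟨x i, hmem⟩ : Submodule.span ℝ (Set.range x)) = b i := by
        apply Subtype.ext
        rw [hb, Module.Basis.span_apply]
      have := hφext ⟨x i, hmem⟩
      rw [hbi] at this
      simpa [hf, hf₀, hb, Module.Basis.span_apply, LinearMap.mkContinuous_apply, Module.Basis.constr_basis, Finsupp.single_apply] using this
    constructor
    · intro hiS
      rw [hvi, hs]
      simp [hiS]
    · intro hiS
      rw [hvi, hs]
      simp [hiS]
end

section
/- Let F be a class of functions Ω → ℝ each bounded in absolute value by 1, and suppose the finite set {x₁,…,xₙ} ⊆ Ω is ε-shattered by F. Then for every choice of signs ε₁,…,εₙ ∈ {−1,1}, sup_{f∈F} |Σᵢ εᵢ f(xᵢ)| ≥ n·ε. -/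
/-- The points `x 0, …, x (n-1)` are `ε`-shattered by the class `F`. -/
def ShatteredBy {Ω : Type*} (F : Set (Ω → ℝ)) {n : ℕ} (x : Fin n → Ω) (ε : ℝ) : Prop :=
  ∃ h : Fin n → ℝ, ∀ S : Finset (Fin n), ∃ f ∈ F,
    ∀ i, (i ∈ S → f (x i) ≤ h i - ε) ∧ (i ∉ S → h i + ε ≤ f (x i))

/-! Shattering the set `S = {i | s i = 1}` and its complement gives `f, g ∈ F` with `g - f` at
least `2ε` in the direction `s` at every point; so the two sums `∑ s i f (x i)`, `∑ s i g (x i)`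
differ by at least `2nε`, and one of them has absolute value at least `nε`. -/

open Finset

section

variable {Ω : Type*} {F : Set (Ω → ℝ)} {n : ℕ} {x : Fin n → Ω} {ε : ℝ}

theorem le_max_abs_of_two_mul_le_sub {a b c : ℝ} (h : 2 * c ≤ a - b) : c ≤ max |a| |b| := by
  rcases le_total c |a| with hc | hc
  · exact le_max_of_le_left hc
  · exact le_max_of_le_right (by linarith [le_abs_self a, neg_le_abs b])

theorem ShatteredBy.exists_signed_sum_sub_ge (hsh : ShatteredBy F x ε) {s : Fin n → ℝ}
    (hs : ∀ i, s i = 1 ∨ s i = -1) :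
    ∃ f ∈ F, ∃ g ∈ F, 2 * (n * ε) ≤ ∑ i, s i * g (x i) - ∑ i, s i * f (x i) := by
  obtain ⟨h, hh⟩ := hsh
  let S : Finset (Fin n) := {i | s i = 1}
  obtain ⟨f, hfF, hf⟩ := hh S
  obtain ⟨g, hgF, hg⟩ := hh Sᶜ
  have pointwise (i : Fin n) : 2 * ε ≤ s i * (g (x i) - f (x i)) := by
    rcases hs i with hi | hi
    · have hiS : i ∈ S := by simp [S, hi]
      rw [hi]
      linarith [(hf i).1 hiS, (hg i).2 (notMem_compl.mpr hiS)]
    · have hiS : i ∉ S := by norm_num [S, hi]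
      rw [hi]
      linarith [(hf i).2 hiS, (hg i).1 (mem_compl.mpr hiS)]
  refine ⟨f, hfF, g, hgF, ?_⟩
  calc 2 * (n * ε) = ∑ _i : Fin n, 2 * ε := by
        simp only [sum_const, card_univ, Fintype.card_fin, nsmul_eq_mul]; ring
    _ ≤ ∑ i, s i * (g (x i) - f (x i)) := sum_le_sum fun i _ ↦ pointwise i
    _ = _ := by simp only [mul_sub, sum_sub_distrib]

theorem bddAbove_range_abs_sum_mul {ι : Type*} [Fintype ι] (hbdd : ∀ f ∈ F, ∀ ω, |f ω| ≤ 1)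
    (s : ι → ℝ) (y : ι → Ω) :
    BddAbove (Set.range fun f : F ↦ |∑ i, s i * (f : Ω → ℝ) (y i)|) := by
  refine ⟨∑ i, |s i|, ?_⟩
  rintro _ ⟨⟨f, hf⟩, rfl⟩
  calc |∑ i, s i * f (y i)| ≤ ∑ i, |s i * f (y i)| := abs_sum_le_sum_abs _ _
    _ ≤ ∑ i, |s i| := sum_le_sum fun i _ ↦ by
        rw [abs_mul]
        exact mul_le_of_le_one_right (abs_nonneg _) (hbdd f hf (y i))

end

theorem shattered_sup_signs_general {Ω : Type*} (F : Set (Ω → ℝ))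
    (hbdd : ∀ f ∈ F, ∀ ω, |f ω| ≤ 1) {n : ℕ} (x : Fin n → Ω) (ε : ℝ)
    (hsh : ShatteredBy F x ε) (s : Fin n → ℝ) (hs : ∀ i, s i = 1 ∨ s i = -1) :
    (n : ℝ) * ε ≤ ⨆ f : F, |∑ i, s i * (f : Ω → ℝ) (x i)| := by
  obtain ⟨f, hf, g, hg, hgap⟩ := hsh.exists_signed_sum_sub_ge hs
  have hbdd' := bddAbove_range_abs_sum_mul hbdd s x
  calc (n : ℝ) * ε ≤ max |∑ i, s i * g (x i)| |∑ i, s i * f (x i)| :=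
        le_max_abs_of_two_mul_le_sub hgap
    _ ≤ ⨆ f : F, |∑ i, s i * (f : Ω → ℝ) (x i)| :=
        max_le (le_ciSup hbdd' ⟨g, hg⟩) (le_ciSup hbdd' ⟨f, hf⟩)

theorem shattered_sup_signs {Ω : Type*} (F : Set (Ω → ℝ))
    (hbdd : ∀ f ∈ F, ∀ ω, |f ω| ≤ 1) {n : ℕ} (x : Fin n → Ω) (ε : ℝ) (hε : 0 < ε)
    (hsh : ShatteredBy F x ε) (s : Fin n → ℝ) (hs : ∀ i, s i = 1 ∨ s i = -1) :
    (n : ℝ) * ε ≤ ⨆ f : F, |∑ i, s i * (f : Ω → ℝ) (x i)| :=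
  shattered_sup_signs_general F hbdd x ε hsh s hs
end

section
/- Let F be a class of functions bounded by 1 on Ω, and suppose {x₁,…,xₙ} is ε-shattered by F. Then the Rademacher average satisfies E_ε sup_{f∈F} |Σᵢ εᵢ f(xᵢ)| ≥ n·ε, where ε₁,…,εₙ are i.i.d. symmetric ±1 random variables. -/
open Finset

local notation "σ" b => (if b then (1 : ℝ) else -1)

section Signs

variable {ι : Type*} [Fintype ι]

lemma abs_sign (b : Bool) : |σ b| = 1 := by
  cases b <;> simp

lemma sum_sign_eq_zero [DecidableEq ι] (i : ι) : ∑ s : ι → Bool, (σ s i) = 0 := by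
  let flipAt : Equiv.Perm (ι → Bool) :=
    Function.Involutive.toPerm (fun s => Function.update s i (!s i)) fun s => by simp
  have hflipAt : ∑ s : ι → Bool, (σ s i) = ∑ s : ι → Bool, -(σ s i) :=
    Fintype.sum_equiv flipAt _ _ fun s => by
      simp only [flipAt, Function.Involutive.toPerm, Equiv.coe_fn_mk, Function.update_self]
      cases s i <;> norm_num
  rw [sum_neg_distrib] at hflipAt
  linarith

lemma sum_sum_sign_mul_eq_zero [DecidableEq ι] (a : ι → ℝ) :
    ∑ s : ι → Bool, ∑ i, (σ s i) * a i = 0 := by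
  rw [sum_comm]
  exact sum_eq_zero fun i _ => by rw [← sum_mul, sum_sign_eq_zero, zero_mul]

lemma abs_sum_sign_mul_le (s : ι → Bool) {a : ι → ℝ} (ha : ∀ i, |a i| ≤ 1) :
    |∑ i, (σ s i) * a i| ≤ Fintype.card ι :=
  calc |∑ i, (σ s i) * a i|
      ≤ ∑ i, |(σ s i) * a i| := abs_sum_le_sum_abs _ _
    _ ≤ ∑ _i : ι, (1 : ℝ) :=
        sum_le_sum fun i _ => by rw [abs_mul, abs_sign, one_mul]; exact ha i
    _ = Fintype.card ι := by simp

end Signs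

lemma ShatteredBy.exists_level_sign_sum_le {Ω : Type*} {F : Set (Ω → ℝ)} {n : ℕ} {x : Fin n → Ω} {ε : ℝ}
    (hsh : ShatteredBy F x ε) :
    ∃ h : Fin n → ℝ, ∀ s : Fin n → Bool, ∃ f ∈ F,
      ∑ i, (σ s i) * h i + n * ε ≤ ∑ i, (σ s i) * f (x i) := by
  obtain ⟨h, hh⟩ := hsh
  refine ⟨h, fun s => ?_⟩
  obtain ⟨f, hfF, hf⟩ := hh {i | s i = false}
  have hterm (i : Fin n) : (σ s i) * h i + ε ≤ (σ s i) * f (x i) := by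
    cases hsi : s i
    · have := (hf i).1 (by simp [hsi])
      simp only [Bool.false_eq_true, if_false]
      linarith
    · have := (hf i).2 (by simp [hsi])
      simp only [if_true, one_mul]
      linarith
  refine ⟨f, hfF, ?_⟩
  calc ∑ i, (σ s i) * h i + n * ε = ∑ i, ((σ s i) * h i + ε) := by
        rw [sum_add_distrib, sum_const, card_univ, Fintype.card_fin, nsmul_eq_mul]
    _ ≤ ∑ i, (σ s i) * f (x i) := sum_le_sum fun i _ => hterm i

theorem shattered_rademacher_general {Ω : Type*} (F : Set (Ω → ℝ))
    (hbdd : ∀ f ∈ F, ∀ ω, |f ω| ≤ 1) {n : ℕ} (x : Fin n → Ω) (ε : ℝ)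
    (hsh : ShatteredBy F x ε) :
    (n : ℝ) * ε ≤
      (∑ s : Fin n → Bool,
        ⨆ f : F, |∑ i, (if s i then (1 : ℝ) else -1) * (f : Ω → ℝ) (x i)|) / 2 ^ n := by
  obtain ⟨h, hh⟩ := hsh.exists_level_sign_sum_le
  have hsup (s : Fin n → Bool) :
      ∑ i, (σ s i) * h i + n * ε ≤ ⨆ f : F, |∑ i, (σ s i) * (f : Ω → ℝ) (x i)| := by
    obtain ⟨f, hfF, hf⟩ := hh s
    -- without this bound `⨆` would take the junk value `0`
    have hbddAbove : BddAbove (Set.range fun f : F => |∑ i, (σ s i) * (f : Ω → ℝ) (x i)|) :=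
      ⟨n, Set.forall_mem_range.2 fun f => by
        simpa using abs_sum_sign_mul_le s fun i => hbdd f f.2 (x i)⟩
    exact hf.trans <| (le_abs_self _).trans <| le_ciSup hbddAbove ⟨f, hfF⟩
  rw [le_div_iff₀ (by positivity)]
  calc (n : ℝ) * ε * 2 ^ n = ∑ s : Fin n → Bool, (∑ i, (σ s i) * h i + n * ε) := by
        rw [sum_add_distrib, sum_sum_sign_mul_eq_zero]; simp [mul_comm]
    _ ≤ _ := sum_le_sum fun s _ => hsup s

/-- The Rademacher average (expectation over uniform random signs) of the supremum is
at least `n * ε` for an `ε`-shattered set. -/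
theorem shattered_rademacher {Ω : Type*} (F : Set (Ω → ℝ))
    (hbdd : ∀ f ∈ F, ∀ ω, |f ω| ≤ 1) {n : ℕ} (x : Fin n → Ω) (ε : ℝ) (hε : 0 < ε)
    (hsh : ShatteredBy F x ε) :
    (n : ℝ) * ε ≤
      (∑ s : Fin n → Bool,
        ⨆ f : F, |∑ i, (if s i then (1 : ℝ) else -1) * (f : Ω → ℝ) (x i)|) / 2 ^ n :=
  shattered_rademacher_general F hbdd x ε hsh
end

section
/- There is an absolute constant c > 0 such that the following holds. Let δ₁,…,δₙ be i.i.d. Bernoulli(δ) random variables with 0 < δ ≤ 1/2, let a = (a₁,…,aₙ) ∈ ℝⁿ, and set M = ‖a‖_{ψ₁ⁿ}, the ψ₁-norm of a with respect to the uniform measure on {1,…,n}. Then for every 0 < t < M/2, P(Σᵢ (δᵢ − δ)aᵢ > t·δ·n) ≤ exp(−c·t²·δ·n/M²). -/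
open MeasureTheory Real

noncomputable def psi1Norm (n : ℕ) (a : Fin n → ℝ) : ℝ :=
  sInf {l : ℝ | 0 < l ∧ (1 / n) * ∑ i, Real.exp (|a i| / l) ≤ Real.exp 1}


lemma exp_le_quadratic_of_nonpos {y : ℝ} (hy : y ≤ 0) :
    Real.exp y ≤ 1 + y + y ^ 2 / 2 := by
  have h : AntitoneOn (fun y : ℝ => 1 + y + y ^ 2 / 2 - Real.exp y) (Set.Iic 0) := by
    apply antitoneOn_of_deriv_nonpos (convex_Iic 0)
    · fun_prop
    · fun_prop
    · intro x hx
      rw [interior_Iic] at hx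
      have h1 : HasDerivAt (fun y : ℝ => 1 + y + y ^ 2 / 2 - Real.exp y)
          (0 + 1 + (2 : ℕ) * x ^ 1 / 2 - Real.exp x) x := by
        exact (((hasDerivAt_const x (1:ℝ)).add (hasDerivAt_id x)).add
          ((hasDerivAt_pow 2 x).div_const 2)).sub (Real.hasDerivAt_exp x)
      rw [h1.deriv]
      have := Real.add_one_le_exp x
      simp only [pow_one]
      nlinarith
  have := h hy (le_refl (0:ℝ)) hy
  simp only [Real.exp_zero] at this
  nlinarith

lemma exp_sub_one_sub_le_of_nonneg {y : ℝ} (hy : 0 ≤ y) :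
    Real.exp y - 1 - y ≤ y ^ 2 / 2 * Real.exp y := by
  have h : MonotoneOn (fun y : ℝ => y ^ 2 / 2 * Real.exp y - Real.exp y + y + 1) (Set.Ici 0) := by
    apply monotoneOn_of_deriv_nonneg (convex_Ici 0)
    · fun_prop
    · fun_prop
    · intro x hx
      rw [interior_Ici] at hx
      have h1 : HasDerivAt (fun y : ℝ => y ^ 2 / 2 * Real.exp y - Real.exp y + y + 1)
          (((2 : ℕ) * x ^ 1 / 2) * Real.exp x + (x ^ 2 / 2) * Real.exp x - Real.exp x + 1 + 0)
          x := by
        exact (((((hasDerivAt_pow 2 x).div_const 2).mul (Real.hasDerivAt_exp x)).sub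
          (Real.hasDerivAt_exp x)).add (hasDerivAt_id x)).add (hasDerivAt_const x (1:ℝ))
      rw [h1.deriv]
      simp only [pow_one]
      -- goal: 0 ≤ 2*x/2*exp x + x^2/2*exp x - exp x + 1 + 0
      have key : (1 - x - x ^ 2 / 2) * Real.exp x ≤ 1 := by
        rcases le_or_gt (1 - x - x ^ 2 / 2) 0 with h0 | h0
        · have := Real.exp_pos x
          nlinarith
        · have h2 : (1 - (x + x ^ 2 / 2)) ≤ Real.exp (-(x + x ^ 2 / 2)) := by
            have := Real.add_one_le_exp (-(x + x ^ 2 / 2)); linarith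
          calc (1 - x - x ^ 2 / 2) * Real.exp x
              ≤ Real.exp (-(x + x ^ 2 / 2)) * Real.exp x := by
                apply mul_le_mul_of_nonneg_right _ (Real.exp_pos x).le
                linarith
            _ = Real.exp (-(x ^ 2 / 2)) := by rw [← Real.exp_add]; ring_nf
            _ ≤ 1 := by rw [Real.exp_le_one_iff]; nlinarith [sq_nonneg x]
          done
      nlinarith [Real.exp_pos x]
  have := h (le_refl (0:ℝ)) hy hy
  simp only [Real.exp_zero] at this
  nlinarith

/-- Key pointwise inequality. -/
lemma exp_sub_one_sub_le (y : ℝ) :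
    Real.exp y - 1 - y ≤ y ^ 2 / 2 * Real.exp |y| := by
  rcases le_or_gt 0 y with hy | hy
  · rw [abs_of_nonneg hy]; exact exp_sub_one_sub_le_of_nonneg hy
  · have h1 := exp_le_quadratic_of_nonpos hy.le
    have h2 : (1 : ℝ) ≤ Real.exp |y| := Real.one_le_exp (abs_nonneg y)
    nlinarith [sq_nonneg y]

/-- `u² ≤ (16/e²)·exp(u/2)` for `u ≥ 0`. -/
lemma sq_le_exp_half {u : ℝ} (hu : 0 ≤ u) :
    u ^ 2 ≤ 16 / Real.exp 1 ^ 2 * Real.exp (u / 2) := by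
  have h1 : u ≤ 4 / Real.exp 1 * Real.exp (u / 4) := by
    have h2 : Real.exp 1 * (u / 4) ≤ Real.exp (u / 4) := by
      have h3 := Real.add_one_le_exp (u / 4 - 1)
      have : Real.exp 1 * (u / 4 - 1 + 1) ≤ Real.exp 1 * Real.exp (u / 4 - 1) :=
        mul_le_mul_of_nonneg_left h3 (Real.exp_pos 1).le
      rw [← Real.exp_add] at this
      norm_num at this
      linarith
    have he := Real.exp_pos 1
    rw [div_mul_eq_mul_div, le_div_iff₀ he]
    linarith
  calc u ^ 2 ≤ (4 / Real.exp 1 * Real.exp (u / 4)) ^ 2 := by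
        apply pow_le_pow_left₀ hu h1
    _ = 16 / Real.exp 1 ^ 2 * Real.exp (u / 2) := by
        have h5 : Real.exp (u / 4) ^ 2 = Real.exp (u / 2) := by
          rw [← Real.exp_nat_mul]; congr 1; ring
        rw [mul_pow, div_pow, h5]
        norm_num


lemma psi1_set_mem {n : ℕ} (hn : 0 < n) (a : Fin n → ℝ) {l : ℝ}
    (hl : psi1Norm n a < l) :
    (1 / (n : ℝ)) * ∑ i, Real.exp (|a i| / l) ≤ Real.exp 1 := by
  set S := {l : ℝ | 0 < l ∧ (1 / (n:ℝ)) * ∑ i, Real.exp (|a i| / l) ≤ Real.exp 1} with hS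
  have hne : S.Nonempty := by
    refine ⟨1 + ∑ i, |a i|, ?_, ?_⟩
    · positivity
    · have hl0 : (0:ℝ) < 1 + ∑ i, |a i| := by positivity
      have : ∀ i : Fin n, Real.exp (|a i| / (1 + ∑ j, |a j|)) ≤ Real.exp 1 := by
        intro i
        apply Real.exp_le_exp.mpr
        rw [div_le_one hl0]
        have : |a i| ≤ ∑ j, |a j| := Finset.single_le_sum (f := fun j => |a j|)
          (fun j _ => abs_nonneg _) (Finset.mem_univ i)
        linarith
      have hsum : ∑ i, Real.exp (|a i| / (1 + ∑ j, |a j|)) ≤ (n : ℝ) * Real.exp 1 := by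
        calc ∑ i, Real.exp (|a i| / (1 + ∑ j, |a j|)) ≤ ∑ _i : Fin n, Real.exp 1 :=
              Finset.sum_le_sum (fun i _ => this i)
          _ = (n : ℝ) * Real.exp 1 := by simp [mul_comm]
      have hn' : (0:ℝ) < (n:ℝ) := by exact_mod_cast hn
      rw [one_div, inv_mul_le_iff₀ hn']
      exact hsum
  have hbdd : BddBelow S := ⟨0, fun x hx => hx.1.le⟩
  have hmem : l ∈ S := by
    obtain ⟨s, hs, hsl⟩ := (csInf_lt_iff hbdd hne).mp hl
    have hs0 : 0 < s := hs.1
    have hl0 : 0 < l := hs0.trans hsl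
    refine ⟨hl0, le_trans ?_ hs.2⟩
    apply mul_le_mul_of_nonneg_left _ (by positivity)
    apply Finset.sum_le_sum
    intro i _
    apply Real.exp_le_exp.mpr
    apply div_le_div_of_nonneg_left (abs_nonneg _) hs0 hsl.le
  exact hmem.2

lemma psi1_prop {n : ℕ} (hn : 0 < n) (a : Fin n → ℝ) (hM : 0 < psi1Norm n a) :
    (1 / (n : ℝ)) * ∑ i, Real.exp (|a i| / psi1Norm n a) ≤ Real.exp 1 := by
  set M := psi1Norm n a with hMdef
  have hcont : ContinuousAt (fun l : ℝ => (1 / (n:ℝ)) * ∑ i, Real.exp (|a i| / l)) M := by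
    apply ContinuousAt.mul continuousAt_const
    exact tendsto_finset_sum _ fun i _ =>
      (Real.continuous_exp.continuousAt.comp (continuousAt_const.div continuousAt_id hM.ne'))
  have htend : Filter.Tendsto (fun l : ℝ => (1 / (n:ℝ)) * ∑ i, Real.exp (|a i| / l))
      (nhdsWithin M (Set.Ioi M)) (nhds ((1 / (n:ℝ)) * ∑ i, Real.exp (|a i| / M))) :=
    hcont.continuousWithinAt.tendsto
  apply le_of_tendsto htend
  filter_upwards [self_mem_nhdsWithin] with l hl
  exact psi1_set_mem hn a hl

lemma bernoulli_factor {δ : ℝ} (hδ0 : 0 < δ) (hδ1 : δ ≤ 1) (hδ : ENNReal.ofReal δ ≤ 1) (y : ℝ) :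
    ∫ b, Real.exp (y * ((if b then (1:ℝ) else 0) - δ))
        ∂((PMF.bernoulli (Real.toNNReal δ) (ENNReal.coe_le_one_iff.mp hδ)).toMeasure)
      ≤ Real.exp (δ * (Real.exp y - 1 - y)) := by
  rw [PMF.integral_eq_sum]
  have htrue : ((PMF.bernoulli (Real.toNNReal δ) (ENNReal.coe_le_one_iff.mp hδ)) true).toReal = δ := by
    simp [PMF.bernoulli_apply, Real.coe_toNNReal _ hδ0.le]
  have hfalse : ((PMF.bernoulli (Real.toNNReal δ) (ENNReal.coe_le_one_iff.mp hδ)) false).toReal = 1 - δ := by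
    simp only [PMF.bernoulli_apply, Bool.cond_false]
    rw [ENNReal.coe_toReal, NNReal.coe_sub (ENNReal.coe_le_one_iff.mp hδ)]
    simp [Real.coe_toNNReal _ hδ0.le]
  rw [Fintype.sum_bool, htrue, hfalse]
  simp only [Bool.false_eq_true, if_true, if_false, smul_eq_mul]
  have key : 1 + δ * (Real.exp y - 1) ≤ Real.exp (δ * (Real.exp y - 1)) := by
    have := Real.add_one_le_exp (δ * (Real.exp y - 1)); linarith
  have e1 : Real.exp (y * (1 - δ)) = Real.exp y * Real.exp (-(y * δ)) := by
    rw [← Real.exp_add]; ring_nf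
  have e2 : Real.exp (y * (0 - δ)) = Real.exp (-(y * δ)) := by congr 1; ring
  rw [e1, e2]
  have e3 : δ * (Real.exp y * Real.exp (-(y * δ))) + (1 - δ) * Real.exp (-(y * δ))
      = (1 + δ * (Real.exp y - 1)) * Real.exp (-(y * δ)) := by ring
  rw [e3]
  calc (1 + δ * (Real.exp y - 1)) * Real.exp (-(y * δ))
      ≤ Real.exp (δ * (Real.exp y - 1)) * Real.exp (-(y * δ)) :=
        mul_le_mul_of_nonneg_right key (Real.exp_pos _).le
    _ = Real.exp (δ * (Real.exp y - 1 - y)) := by rw [← Real.exp_add]; ring_nf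



lemma pi_integral_prod (μb : MeasureTheory.Measure Bool) [IsProbabilityMeasure μb] (n : ℕ)
    (g : Fin n → Bool → ℝ) :
    (∫ x : Fin n → Bool, ∏ i, g i (x i) ∂(Measure.pi (fun _ : Fin n => μb)))
      = ∏ i, ∫ b, g i b ∂μb := by
  letI : MeasureSpace Bool := ⟨μb⟩
  haveI : IsProbabilityMeasure (volume : Measure Bool) := ‹_›
  exact MeasureTheory.integral_fintype_prod_eq_prod g

/-- One-sided tail bound for `∑ (δᵢ - δ) aᵢ` for independent Bernoulli(δ) selectors. -/
theorem selector_tail :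
    ∃ c : ℝ, 0 < c ∧ ∀ (n : ℕ) (δ : ℝ), 0 < δ → δ ≤ 1 / 2 →
      ∀ (hδ : ENNReal.ofReal δ ≤ 1) (a : Fin n → ℝ) (M : ℝ), M = psi1Norm n a →
      ∀ t : ℝ, 0 < t → t < M / 2 →
      (Measure.pi fun _ : Fin n => (PMF.bernoulli (Real.toNNReal δ) (ENNReal.coe_le_one_iff.mp hδ)).toMeasure)
          {x | t * δ * n < ∑ i, ((if x i then (1 : ℝ) else 0) - δ) * a i} ≤
        ENNReal.ofReal (Real.exp (-(c * t ^ 2 * δ * n) / M ^ 2)) := by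
  refine ⟨1/16, by norm_num, ?_⟩
  intro n δ hδ0 hδhalf hδ a M hMdef t ht htM
  set μb := (PMF.bernoulli (Real.toNNReal δ) (ENNReal.coe_le_one_iff.mp hδ)).toMeasure with hμb
  set μ := Measure.pi (fun _ : Fin n => μb) with hμ
  haveI : IsProbabilityMeasure μb := PMF.toMeasure.isProbabilityMeasure _
  haveI : IsProbabilityMeasure μ := Measure.pi.instIsProbabilityMeasure _
  rcases Nat.eq_zero_or_pos n with hn | hn
  · subst hn
    have hempty : {x : Fin 0 → Bool |
        t * δ * (0:ℕ) < ∑ i : Fin 0, ((if x i then (1:ℝ) else 0) - δ) * a i} = ∅ := by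
      ext x; simp
    rw [hempty]
    simp
  -- main case
  have hM : 0 < M := by linarith
  have hδ1 : δ ≤ 1 := by linarith
  have hn' : (0:ℝ) < (n:ℝ) := by exact_mod_cast hn
  set lam := t / (8 * M ^ 2) with hlam
  have hlam0 : 0 ≤ lam := by positivity
  have hlamM : lam ≤ 1 / (2 * M) := by
    rw [hlam, div_le_div_iff₀ (by positivity) (by positivity)]
    nlinarith
  set S := fun x : Fin n → Bool => ∑ i, ((if x i then (1:ℝ) else 0) - δ) * a i with hS
  have hint : Integrable (fun x => Real.exp (lam * S x)) μ := .of_finite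
  have hch := ProbabilityTheory.measure_ge_le_exp_mul_mgf (X := S) (μ := μ)
    (t := lam) (t * δ * n) hlam0 hint
  -- compute/bound the mgf
  have hmgf : ProbabilityTheory.mgf S μ lam
      ≤ Real.exp (δ * lam ^ 2 * (8 / Real.exp 1) * M ^ 2 * n) := by
    have hrw : (fun x : Fin n → Bool => Real.exp (lam * S x))
        = fun x => ∏ i, Real.exp ((lam * a i) * ((if x i then (1:ℝ) else 0) - δ)) := by
      funext x
      rw [hS, Finset.mul_sum, Real.exp_sum]
      exact Finset.prod_congr rfl fun i _ => by congr 1; ring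
    have hprod : (∫ x : Fin n → Bool,
          ∏ i, Real.exp ((lam * a i) * ((if x i then (1:ℝ) else 0) - δ)) ∂μ)
        = ∏ i, ∫ b, Real.exp ((lam * a i) * ((if b then (1:ℝ) else 0) - δ)) ∂μb :=
      pi_integral_prod μb n
        (fun i b => Real.exp ((lam * a i) * ((if b then (1:ℝ) else 0) - δ)))
    have hfac : ∀ i : Fin n, ∫ b, Real.exp ((lam * a i) * ((if b then (1:ℝ) else 0) - δ)) ∂μb
        ≤ Real.exp (δ * ((lam * a i) ^ 2 / 2 * Real.exp |lam * a i|)) := by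
      intro i
      refine (bernoulli_factor hδ0 hδ1 hδ (lam * a i)).trans ?_
      apply Real.exp_le_exp.mpr
      exact mul_le_mul_of_nonneg_left (exp_sub_one_sub_le _) hδ0.le
    have hprodle : (∏ i, ∫ b, Real.exp ((lam * a i) * ((if b then (1:ℝ) else 0) - δ)) ∂μb)
        ≤ ∏ i, Real.exp (δ * ((lam * a i) ^ 2 / 2 * Real.exp |lam * a i|)) := by
      apply Finset.prod_le_prod
      · intro i _
        exact integral_nonneg fun b => (Real.exp_pos _).le
      · intro i _
        exact hfac i
    have hterm : ∀ i : Fin n, δ * ((lam * a i) ^ 2 / 2 * Real.exp |lam * a i|)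
        ≤ δ * (lam ^ 2 * (8 / Real.exp 1 ^ 2) * M ^ 2 * Real.exp (|a i| / M)) := by
      intro i
      apply mul_le_mul_of_nonneg_left _ hδ0.le
      set u := |a i| / M with hu
      have hu0 : 0 ≤ u := by positivity
      have habs : |lam * a i| = lam * |a i| := by
        rw [abs_mul, abs_of_nonneg hlam0]
      have h2 : lam * |a i| ≤ u / 2 := by
        rw [hu]
        calc lam * |a i| ≤ 1 / (2 * M) * |a i| :=
              mul_le_mul_of_nonneg_right hlamM (abs_nonneg _)
          _ = |a i| / M / 2 := by
              rw [div_div, mul_comm M 2, one_div_mul_eq_div]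
      have hsq : a i ^ 2 = M ^ 2 * u ^ 2 := by
        rw [hu]
        field_simp
        rw [sq_abs]
      have hexple : Real.exp |lam * a i| ≤ Real.exp (u / 2) := by
        rw [habs]; exact Real.exp_le_exp.mpr h2
      have hkey : u ^ 2 * Real.exp (u / 2) ≤ 16 / Real.exp 1 ^ 2 * Real.exp u := by
        calc u ^ 2 * Real.exp (u / 2)
            ≤ 16 / Real.exp 1 ^ 2 * Real.exp (u / 2) * Real.exp (u / 2) :=
              mul_le_mul_of_nonneg_right (sq_le_exp_half hu0) (Real.exp_pos _).le
          _ = 16 / Real.exp 1 ^ 2 * Real.exp u := by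
              rw [mul_assoc, ← Real.exp_add]
              norm_num
      have hexpu : Real.exp (|a i| / M) = Real.exp u := by rw [hu]
      calc (lam * a i) ^ 2 / 2 * Real.exp |lam * a i|
          = lam ^ 2 / 2 * (a i ^ 2 * Real.exp |lam * a i|) := by ring
        _ ≤ lam ^ 2 / 2 * (M ^ 2 * (u ^ 2 * Real.exp (u / 2))) := by
            apply mul_le_mul_of_nonneg_left _ (by positivity)
            rw [hsq]
            rw [mul_assoc]
            apply mul_le_mul_of_nonneg_left _ (by positivity)
            exact mul_le_mul_of_nonneg_left hexple (by positivity)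
        _ ≤ lam ^ 2 / 2 * (M ^ 2 * (16 / Real.exp 1 ^ 2 * Real.exp u)) := by
            apply mul_le_mul_of_nonneg_left _ (by positivity)
            exact mul_le_mul_of_nonneg_left hkey (by positivity)
        _ = lam ^ 2 * (8 / Real.exp 1 ^ 2) * M ^ 2 * Real.exp (|a i| / M) := by
            rw [hexpu]; ring
    have hsumbound : ∑ i, δ * (lam ^ 2 * (8 / Real.exp 1 ^ 2) * M ^ 2 * Real.exp (|a i| / M))
        ≤ δ * lam ^ 2 * (8 / Real.exp 1) * M ^ 2 * n := by
      have hpsi : ∑ i, Real.exp (|a i| / M) ≤ Real.exp 1 * n := by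
        have := psi1_prop hn a (hMdef ▸ hM)
        rw [← hMdef] at this
        rw [one_div, inv_mul_le_iff₀ hn'] at this
        linarith [this]
      have hc : (0:ℝ) ≤ δ * (lam ^ 2 * (8 / Real.exp 1 ^ 2) * M ^ 2) := by positivity
      calc ∑ i, δ * (lam ^ 2 * (8 / Real.exp 1 ^ 2) * M ^ 2 * Real.exp (|a i| / M))
          = δ * (lam ^ 2 * (8 / Real.exp 1 ^ 2) * M ^ 2) * ∑ i, Real.exp (|a i| / M) := by
            rw [Finset.mul_sum]
            exact Finset.sum_congr rfl fun i _ => by ring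
        _ ≤ δ * (lam ^ 2 * (8 / Real.exp 1 ^ 2) * M ^ 2) * (Real.exp 1 * n) :=
            mul_le_mul_of_nonneg_left hpsi hc
        _ = δ * lam ^ 2 * (8 / Real.exp 1) * M ^ 2 * n := by
            have he0 : Real.exp 1 ≠ 0 := (Real.exp_pos 1).ne'
            have h8 : (8 / Real.exp 1 ^ 2) * Real.exp 1 = 8 / Real.exp 1 := by
              rw [pow_two, div_mul_eq_mul_div, mul_div_mul_right _ _ he0]
            calc δ * (lam ^ 2 * (8 / Real.exp 1 ^ 2) * M ^ 2) * (Real.exp 1 * ↑n)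
                = δ * lam ^ 2 * ((8 / Real.exp 1 ^ 2) * Real.exp 1) * M ^ 2 * ↑n := by ring
              _ = δ * lam ^ 2 * (8 / Real.exp 1) * M ^ 2 * ↑n := by rw [h8]
    calc ProbabilityTheory.mgf S μ lam
        = ∫ x, Real.exp (lam * S x) ∂μ := rfl
      _ = ∏ i, ∫ b, Real.exp ((lam * a i) * ((if b then (1:ℝ) else 0) - δ)) ∂μb := by
          rw [← hprod]
          exact congrArg _ hrw
      _ ≤ ∏ i, Real.exp (δ * ((lam * a i) ^ 2 / 2 * Real.exp |lam * a i|)) := hprodle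
      _ = Real.exp (∑ i, δ * ((lam * a i) ^ 2 / 2 * Real.exp |lam * a i|)) :=
          (Real.exp_sum _ _).symm
      _ ≤ Real.exp (δ * lam ^ 2 * (8 / Real.exp 1) * M ^ 2 * n) := by
          apply Real.exp_le_exp.mpr
          exact le_trans (Finset.sum_le_sum fun i _ => hterm i) hsumbound
  have hexp2 : (2:ℝ) ≤ Real.exp 1 := by
    have := Real.add_one_le_exp 1; linarith
  have hfinal : Real.exp (-lam * (t * δ * n)) * ProbabilityTheory.mgf S μ lam
      ≤ Real.exp (-(1/16 * t ^ 2 * δ * n) / M ^ 2) := by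
    have h1 : Real.exp (-lam * (t * δ * n)) * ProbabilityTheory.mgf S μ lam
        ≤ Real.exp (-lam * (t * δ * n)) * Real.exp (δ * lam ^ 2 * (8 / Real.exp 1) * M ^ 2 * n) :=
      mul_le_mul_of_nonneg_left hmgf (Real.exp_pos _).le
    rw [← Real.exp_add] at h1
    refine h1.trans (Real.exp_le_exp.mpr ?_)
    -- algebra
    have he : 0 < Real.exp 1 := Real.exp_pos 1
    have hM2 : (0:ℝ) < M ^ 2 := by positivity
    have h2 : δ * lam ^ 2 * (8 / Real.exp 1) * M ^ 2 * (n:ℝ)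
        = δ * (n:ℝ) * t ^ 2 / (8 * M ^ 2) * (1 / Real.exp 1) := by
      rw [hlam]; field_simp
    have h3 : -lam * (t * δ * (n:ℝ)) = -(δ * (n:ℝ) * t ^ 2 / (8 * M ^ 2)) := by
      rw [hlam]; field_simp
    have h4 : -(1/16 * t ^ 2 * δ * (n:ℝ)) / M ^ 2
        = -(δ * (n:ℝ) * t ^ 2 / (8 * M ^ 2)) * (1/2) := by
      field_simp; ring
    rw [h2, h3, h4]
    have hX : 0 < δ * (n:ℝ) * t ^ 2 / (8 * M ^ 2) := by positivity
    have h5 : 1 / Real.exp 1 ≤ 1 / 2 := by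
      rw [div_le_div_iff₀ he (by norm_num)]; linarith
    nlinarith [mul_le_mul_of_nonneg_left h5 hX.le]
  calc μ {x | t * δ * n < S x} ≤ μ {x | t * δ * n ≤ S x} :=
        measure_mono (Set.setOf_subset_setOf.mpr fun x => le_of_lt)
    _ = ENNReal.ofReal ((μ {x | t * δ * n ≤ S x}).toReal) :=
        (ENNReal.ofReal_toReal (measure_ne_top μ _)).symm
    _ ≤ ENNReal.ofReal (Real.exp (-(1/16 * t ^ 2 * δ * n) / M ^ 2)) :=
        ENNReal.ofReal_le_ofReal (hch.trans hfinal)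
end

section
/- There is an absolute constant c > 0 such that: for i.i.d. Bernoulli(δ) selectors δ₁,…,δₙ (0 < δ ≤ 1/2), a ∈ ℝⁿ with M = ‖a‖_{ψ₁ⁿ}, and 0 < t < M/2, one has P(|Σᵢ (δᵢ − δ)aᵢ| > t·δ·n) ≤ 2·exp(−c·t²·δ·n/M²). -/
open MeasureTheory Real Filter


-- Lemma A
lemma bern_mgf (p u : ℝ) : p * Real.exp ((1 - p) * u) + (1 - p) * Real.exp (-(p * u)) ≤
    Real.exp (p * (Real.exp u - 1 - u)) := by
  have h1 : 1 + p * (Real.exp u - 1) ≤ Real.exp (p * (Real.exp u - 1)) := by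
    linarith [Real.add_one_le_exp (p * (Real.exp u - 1))]
  have h2 : Real.exp ((1 - p) * u) = Real.exp u * Real.exp (-(p * u)) := by
    rw [← Real.exp_add]; ring_nf
  calc p * Real.exp ((1 - p) * u) + (1 - p) * Real.exp (-(p * u))
      = (1 + p * (Real.exp u - 1)) * Real.exp (-(p * u)) := by rw [h2]; ring
    _ ≤ Real.exp (p * (Real.exp u - 1)) * Real.exp (-(p * u)) :=
        mul_le_mul_of_nonneg_right h1 (Real.exp_pos _).le
    _ = Real.exp (p * (Real.exp u - 1 - u)) := by rw [← Real.exp_add]; ring_nf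

-- Lemma B
lemma exp_sub_abs (u : ℝ) : Real.exp u - 1 - u ≤ Real.exp |u| - 1 - |u| := by
  rcases le_or_gt 0 u with h | h
  · rw [abs_of_nonneg h]
  · rw [abs_of_neg h]
    have h1 : (-u) ≤ Real.sinh (-u) := Real.self_le_sinh_iff.mpr (by linarith)
    have h2 : Real.sinh (-u) = (Real.exp (-u) - Real.exp (-(-u))) / 2 := Real.sinh_eq _
    simp only [neg_neg] at h2
    linarith

-- Lemma C
lemma exp_sub_le_sq (u : ℝ) (hu : 0 ≤ u) : Real.exp u - 1 - u ≤ u ^ 2 * Real.exp u := by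
  have h1 : Real.exp u - 1 ≤ u * Real.exp u := by
    have h0 := Real.add_one_le_exp (-u)
    have h2 := mul_le_mul_of_nonneg_right h0 (Real.exp_pos u).le
    have h3 : Real.exp (-u) * Real.exp u = 1 := by rw [← Real.exp_add]; simp
    nlinarith
  nlinarith

lemma exp_combined (u : ℝ) : Real.exp u - 1 - u ≤ u ^ 2 * Real.exp |u| := by
  calc Real.exp u - 1 - u ≤ Real.exp |u| - 1 - |u| := exp_sub_abs u
    _ ≤ |u| ^ 2 * Real.exp |u| := exp_sub_le_sq _ (abs_nonneg u)
    _ = u ^ 2 * Real.exp |u| := by rw [sq_abs]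

-- Lemma D
lemma sq_exp_half (x : ℝ) (hx : 0 ≤ x) : x ^ 2 * Real.exp (x / 2) ≤ 16 * Real.exp x := by
  have h1 : 1 + x / 4 ≤ Real.exp (x / 4) := by linarith [Real.add_one_le_exp (x / 4)]
  have h2 : Real.exp (x / 2) = Real.exp (x / 4) * Real.exp (x / 4) := by
    rw [← Real.exp_add]; ring_nf
  have h3 : Real.exp x = Real.exp (x / 2) * Real.exp (x / 2) := by
    rw [← Real.exp_add]; ring_nf
  have hx2 : x ^ 2 ≤ 16 * Real.exp (x / 2) := by nlinarith [Real.exp_pos (x / 4)]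
  nlinarith [Real.exp_pos (x / 2)]

lemma key_sq (y M : ℝ) (hM : 0 < M) (hy : 0 ≤ y) :
    y ^ 2 * Real.exp (y / (2 * M)) ≤ 16 * M ^ 2 * Real.exp (y / M) := by
  have h := sq_exp_half (y / M) (by positivity)
  have h2 : (y / M) ^ 2 = y ^ 2 / M ^ 2 := by rw [div_pow]
  have h3 : y / M / 2 = y / (2 * M) := by rw [div_div]; ring_nf
  rw [h2, h3] at h
  calc y ^ 2 * Real.exp (y / (2 * M))
      = M ^ 2 * (y ^ 2 / M ^ 2 * Real.exp (y / (2 * M))) := by field_simp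
    _ ≤ M ^ 2 * (16 * Real.exp (y / M)) := mul_le_mul_of_nonneg_left h (sq_nonneg M)
    _ = 16 * M ^ 2 * Real.exp (y / M) := by ring

lemma psi1_sum_le (n : ℕ) (a : Fin n → ℝ) (hM : 0 < psi1Norm n a) :
    ∑ i, Real.exp (|a i| / psi1Norm n a) ≤ Real.exp 1 * n := by
  set M := psi1Norm n a with hMdef
  set S := {l : ℝ | 0 < l ∧ (1 / n) * ∑ i, Real.exp (|a i| / l) ≤ Real.exp 1} with hS
  have hne : S.Nonempty := by
    by_contra h
    rw [Set.not_nonempty_iff_eq_empty] at h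
    have : M = 0 := by rw [hMdef, psi1Norm, ← hS, h, Real.sInf_empty]
    linarith
  rcases Nat.eq_zero_or_pos n with hn | hn
  · subst hn; simp
  have hn0 : (0 : ℝ) < n := by exact_mod_cast hn
  -- step 1: for every ε > 0
  have step1 : ∀ ε ∈ Set.Ioi (0:ℝ), ∑ i, Real.exp (|a i| / (M + ε)) ≤ Real.exp 1 * n := by
    intro ε hε
    rw [Set.mem_Ioi] at hε
    have hlt : sInf S < M + ε := by rw [hMdef, psi1Norm, ← hS] at *; linarith
    obtain ⟨l, hlS, hl⟩ := exists_lt_of_csInf_lt hne hlt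
    obtain ⟨hl0, hle⟩ := hlS
    have hsum : ∑ i, Real.exp (|a i| / l) ≤ Real.exp 1 * n := by
      rw [div_mul_eq_mul_div, div_le_iff₀ hn0, one_mul] at hle
      linarith [hle]
    calc ∑ i, Real.exp (|a i| / (M + ε)) ≤ ∑ i, Real.exp (|a i| / l) := by
          apply Finset.sum_le_sum
          intro i _
          apply Real.exp_le_exp.mpr
          gcongr
      _ ≤ Real.exp 1 * n := hsum
  -- step 2: limit
  have htend : Tendsto (fun ε : ℝ => ∑ i, Real.exp (|a i| / (M + ε))) (nhdsWithin 0 (Set.Ioi 0))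
      (nhds (∑ i, Real.exp (|a i| / (M + 0)))) := by
    apply Filter.Tendsto.mono_left _ nhdsWithin_le_nhds
    apply tendsto_finset_sum
    intro i _
    apply (Real.continuous_exp.tendsto _).comp
    apply Filter.Tendsto.div tendsto_const_nhds
    · exact (continuous_const.add continuous_id).tendsto 0
    · simpa using hM.ne'
  rw [add_zero] at htend
  exact le_of_tendsto htend (eventually_nhdsWithin_of_forall step1)


lemma bern_integral (δ : ℝ) (hδ0 : 0 < δ) (hδ : ENNReal.ofReal δ ≤ 1) (hδ1 : δ ≤ 1) (g : Bool → ℝ) :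
    ∫ b, g b ∂((PMF.bernoulli (Real.toNNReal δ) (ENNReal.coe_le_one_iff.mp hδ)).toMeasure) = δ * g true + (1 - δ) * g false := by
  rw [PMF.integral_eq_sum, Fintype.sum_bool]
  simp only [PMF.bernoulli_apply, cond_true, cond_false]
  have h1 : ((1 - δ.toNNReal : NNReal) : ENNReal).toReal = 1 - δ := by
    rw [ENNReal.coe_toReal, NNReal.coe_sub (ENNReal.coe_le_one_iff.mp hδ), NNReal.coe_one,
      Real.coe_toNNReal _ hδ0.le]
  have h0 : ((δ.toNNReal : NNReal) : ENNReal).toReal = δ := by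
    rw [ENNReal.coe_toReal, Real.coe_toNNReal _ hδ0.le]
  rw [h0, h1, smul_eq_mul, smul_eq_mul]

lemma one_sided (n : ℕ) (δ : ℝ) (hδ0 : 0 < δ) (hδh : δ ≤ 1 / 2)
    (hδ : ENNReal.ofReal δ ≤ 1) (a : Fin n → ℝ) (M : ℝ) (hM : 0 < M)
    (hsum : ∑ i, Real.exp (|a i| / M) ≤ Real.exp 1 * n)
    (t : ℝ) (ht : 0 < t) (htM : t < M / 2) :
    (Measure.pi fun _ : Fin n => (PMF.bernoulli (Real.toNNReal δ) (ENNReal.coe_le_one_iff.mp hδ)).toMeasure)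
      {x | t * δ * n < ∑ i, ((if x i then (1 : ℝ) else 0) - δ) * a i} ≤
    ENNReal.ofReal (Real.exp (-(1 / 192 * t ^ 2 * δ * n) / M ^ 2)) := by
  set ν := (PMF.bernoulli (Real.toNNReal δ) (ENNReal.coe_le_one_iff.mp hδ)).toMeasure with hν
  set μ := Measure.pi fun _ : Fin n => ν with hμ
  set l : ℝ := t / (96 * M ^ 2) with hl
  have hl0 : 0 < l := by positivity
  have hlM : l ≤ 1 / (2 * M) := by
    rw [hl, div_le_div_iff₀ (by positivity) (by positivity)]
    nlinarith
  set s : ℝ := t * δ * n with hs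
  set g : Fin n → Bool → ℝ := fun i b => Real.exp (l * (((if b then (1:ℝ) else 0) - δ) * a i))
    with hg
  set S : (Fin n → Bool) → ℝ := fun x => ∑ i, ((if x i then (1:ℝ) else 0) - δ) * a i with hSdef
  set f : (Fin n → Bool) → ℝ := fun x => Real.exp (l * S x) with hf
  -- instances
  letI : MeasureSpace Bool := ⟨ν⟩
  have hvol : (volume : Measure (Fin n → Bool)) = μ := rfl
  haveI hprob : IsProbabilityMeasure ν := PMF.toMeasure.isProbabilityMeasure _
  haveI : IsProbabilityMeasure (volume : Measure Bool) := hprob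
  haveI : IsProbabilityMeasure μ := by rw [hμ]; infer_instance
  haveI : IsFiniteMeasure (volume : Measure (Fin n → Bool)) := by rw [hvol]; infer_instance
  -- product formula
  have hfact : ∫ x, f x ∂μ = ∏ i, ∫ b, g i b ∂ν := by
    have h0 : ∀ x : Fin n → Bool, f x = ∏ i, g i (x i) := by
      intro x
      rw [hf, hSdef]
      simp only
      rw [Finset.mul_sum, Real.exp_sum]
    have h1 : (∫ x, f x ∂μ) = ∫ x : Fin n → Bool, ∏ i, g i (x i) := by
      rw [← hvol]
      exact integral_congr_ae (Filter.Eventually.of_forall h0)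
    rw [h1]
    exact integral_fintype_prod_eq_prod (f := g)
  -- single-coordinate bound
  have hone : ∀ i, ∫ b, g i b ∂ν = δ * Real.exp ((1 - δ) * (l * a i))
      + (1 - δ) * Real.exp (-(δ * (l * a i))) := by
    intro i
    rw [hν, bern_integral δ hδ0 hδ (by linarith)]
    have gt : g i true = Real.exp ((1 - δ) * (l * a i)) := by
      simp only [hg, eq_self_iff_true, if_true]
      congr 1; ring
    have gf : g i false = Real.exp (-(δ * (l * a i))) := by
      simp only [hg, Bool.false_eq_true, if_false]
      congr 1; ring
    rw [gt, gf]
  have hbound : ∀ i, ∫ b, g i b ∂ν ≤ Real.exp (16 * δ * l ^ 2 * M ^ 2 * Real.exp (|a i| / M)) := by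
    intro i
    rw [hone i]
    refine le_trans (bern_mgf δ (l * a i)) ?_
    apply Real.exp_le_exp.mpr
    calc δ * (Real.exp (l * a i) - 1 - l * a i)
        ≤ δ * ((l * a i) ^ 2 * Real.exp |l * a i|) := by
          apply mul_le_mul_of_nonneg_left (exp_combined _) hδ0.le
      _ = δ * l ^ 2 * (a i ^ 2 * Real.exp (l * |a i|)) := by
          rw [abs_mul, abs_of_pos hl0]; ring
      _ ≤ δ * l ^ 2 * (a i ^ 2 * Real.exp (|a i| / (2 * M))) := by
          apply mul_le_mul_of_nonneg_left _ (by positivity)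
          apply mul_le_mul_of_nonneg_left _ (sq_nonneg _)
          apply Real.exp_le_exp.mpr
          calc l * |a i| ≤ 1 / (2 * M) * |a i| :=
                mul_le_mul_of_nonneg_right hlM (abs_nonneg _)
            _ = |a i| / (2 * M) := by ring
      _ ≤ δ * l ^ 2 * (16 * M ^ 2 * Real.exp (|a i| / M)) := by
          apply mul_le_mul_of_nonneg_left _ (by positivity)
          have h2 : a i ^ 2 = |a i| ^ 2 := (sq_abs _).symm
          rw [h2]
          exact key_sq |a i| M hM (abs_nonneg _)
      _ = 16 * δ * l ^ 2 * M ^ 2 * Real.exp (|a i| / M) := by ring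
  -- integral nonneg per coordinate
  have hnn : ∀ i, 0 ≤ ∫ b, g i b ∂ν := fun i =>
    integral_nonneg fun b => (Real.exp_pos _).le
  -- MGF bound
  have hmgf : ∫ x, f x ∂μ ≤ Real.exp (48 * δ * l ^ 2 * M ^ 2 * n) := by
    rw [hfact]
    calc ∏ i, ∫ b, g i b ∂ν
        ≤ ∏ i : Fin n, Real.exp (16 * δ * l ^ 2 * M ^ 2 * Real.exp (|a i| / M)) :=
          Finset.prod_le_prod (fun i _ => hnn i) (fun i _ => hbound i)
      _ = Real.exp (∑ i, 16 * δ * l ^ 2 * M ^ 2 * Real.exp (|a i| / M)) :=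
          (Real.exp_sum _ _).symm
      _ ≤ Real.exp (48 * δ * l ^ 2 * M ^ 2 * n) := by
          apply Real.exp_le_exp.mpr
          rw [← Finset.mul_sum]
          have he : Real.exp 1 ≤ 3 := by
            have := Real.exp_one_lt_d9
            linarith
          have hsum3 : ∑ i, Real.exp (|a i| / M) ≤ 3 * n := by
            calc ∑ i, Real.exp (|a i| / M) ≤ Real.exp 1 * n := hsum
              _ ≤ 3 * n := by
                  apply mul_le_mul_of_nonneg_right he (Nat.cast_nonneg n)
          calc 16 * δ * l ^ 2 * M ^ 2 * ∑ i, Real.exp (|a i| / M)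
              ≤ 16 * δ * l ^ 2 * M ^ 2 * (3 * n) := by
                apply mul_le_mul_of_nonneg_left hsum3 (by positivity)
            _ = 48 * δ * l ^ 2 * M ^ 2 * n := by ring
  -- Chernoff
  have hint : Integrable f μ := by
    rw [← hvol]
    exact Integrable.of_finite
  have markov := mul_meas_ge_le_integral_of_nonneg
    (μ := μ) (f := f) (Filter.Eventually.of_forall fun x => (Real.exp_pos _).le) hint
    (Real.exp (l * s))
  have hsub : {x | s < S x} ⊆ {x | Real.exp (l * s) ≤ f x} := by
    intro x hx
    simp only [Set.mem_setOf_eq] at hx ⊢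
    apply Real.exp_le_exp.mpr
    exact mul_le_mul_of_nonneg_left hx.le hl0.le
  have hfin : μ {x | Real.exp (l * s) ≤ f x} ≠ ⊤ := measure_ne_top μ _
  have hTle : (μ {x | Real.exp (l * s) ≤ f x}).toReal
      ≤ Real.exp (-(l * s)) * ∫ x, f x ∂μ := by
    rw [Real.exp_neg]
    rw [inv_mul_eq_div, le_div_iff₀ (Real.exp_pos _)]
    unfold Measure.real at markov
    linarith [markov]
  calc μ {x | s < S x} ≤ μ {x | Real.exp (l * s) ≤ f x} := measure_mono hsub
    _ = ENNReal.ofReal ((μ {x | Real.exp (l * s) ≤ f x}).toReal) :=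
        (ENNReal.ofReal_toReal hfin).symm
    _ ≤ ENNReal.ofReal (Real.exp (-(l * s)) * ∫ x, f x ∂μ) := ENNReal.ofReal_le_ofReal hTle
    _ ≤ ENNReal.ofReal (Real.exp (-(l * s)) * Real.exp (48 * δ * l ^ 2 * M ^ 2 * n)) := by
        apply ENNReal.ofReal_le_ofReal
        apply mul_le_mul_of_nonneg_left hmgf (Real.exp_pos _).le
    _ = ENNReal.ofReal (Real.exp (-(l * s) + 48 * δ * l ^ 2 * M ^ 2 * n)) := by
        rw [← Real.exp_add]
    _ = ENNReal.ofReal (Real.exp (-(1 / 192 * t ^ 2 * δ * n) / M ^ 2)) := by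
        congr 1
        congr 1
        rw [hl, hs]
        field_simp
        ring
/-- Two-sided tail bound for `∑ (δᵢ - δ) aᵢ` for independent Bernoulli(δ) selectors. -/
theorem selector_tail_two_sided :
    ∃ c : ℝ, 0 < c ∧ ∀ (n : ℕ) (δ : ℝ), 0 < δ → δ ≤ 1 / 2 →
      ∀ (hδ : ENNReal.ofReal δ ≤ 1) (a : Fin n → ℝ) (M : ℝ), M = psi1Norm n a →
      ∀ t : ℝ, 0 < t → t < M / 2 →
      (Measure.pi fun _ : Fin n => (PMF.bernoulli (Real.toNNReal δ) (ENNReal.coe_le_one_iff.mp hδ)).toMeasure)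
          {x | t * δ * n < |∑ i, ((if x i then (1 : ℝ) else 0) - δ) * a i|} ≤
        2 * ENNReal.ofReal (Real.exp (-(c * t ^ 2 * δ * n) / M ^ 2)) := by
  refine ⟨1 / 192, by norm_num, ?_⟩
  intro n δ hδ0 hδh hδ a M hMeq t ht htM
  have hM : 0 < M := by linarith
  have hsum : ∑ i, Real.exp (|a i| / M) ≤ Real.exp 1 * n := by
    rw [hMeq]; exact psi1_sum_le n a (hMeq ▸ hM)
  have hsum' : ∑ i, Real.exp (|(-a ·) i| / M) ≤ Real.exp 1 * n := by
    simpa [abs_neg] using hsum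
  have h1 := one_sided n δ hδ0 hδh hδ a M hM hsum t ht htM
  have h2 := one_sided n δ hδ0 hδh hδ (fun i => -a i) M hM hsum' t ht htM
  set μ := Measure.pi fun _ : Fin n => (PMF.bernoulli (Real.toNNReal δ) (ENNReal.coe_le_one_iff.mp hδ)).toMeasure with hμ
  have hsub : {x : Fin n → Bool | t * δ * n < |∑ i, ((if x i then (1:ℝ) else 0) - δ) * a i|}
      ⊆ {x : Fin n → Bool | t * δ * n < ∑ i, ((if x i then (1:ℝ) else 0) - δ) * a i}
      ∪ {x : Fin n → Bool | t * δ * n < ∑ i, ((if x i then (1:ℝ) else 0) - δ) * (-a i)} := by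
    intro x hx
    simp only [Set.mem_setOf_eq, Set.mem_union] at hx ⊢
    rcases lt_abs.mp hx with h | h
    · exact Or.inl h
    · right
      have hneg : ∑ i, ((if x i then (1:ℝ) else 0) - δ) * (-a i)
          = -∑ i, ((if x i then (1:ℝ) else 0) - δ) * a i := by
        simp [mul_neg]
      rw [hneg]; exact h
  calc μ {x | t * δ * n < |∑ i, ((if x i then (1:ℝ) else 0) - δ) * a i|}
      ≤ μ ({x : Fin n → Bool | t * δ * n < ∑ i, ((if x i then (1:ℝ) else 0) - δ) * a i}
        ∪ {x : Fin n → Bool | t * δ * n < ∑ i, ((if x i then (1:ℝ) else 0) - δ) * (-a i)}) :=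
        measure_mono hsub
    _ ≤ μ {x : Fin n → Bool | t * δ * n < ∑ i, ((if x i then (1:ℝ) else 0) - δ) * a i}
        + μ {x : Fin n → Bool | t * δ * n < ∑ i, ((if x i then (1:ℝ) else 0) - δ) * (-a i)} :=
        measure_union_le _ _
    _ ≤ ENNReal.ofReal (Real.exp (-(1 / 192 * t ^ 2 * δ * n) / M ^ 2))
        + ENNReal.ofReal (Real.exp (-(1 / 192 * t ^ 2 * δ * n) / M ^ 2)) := add_le_add h1 h2
    _ = 2 * ENNReal.ofReal (Real.exp (-(1 / 192 * t ^ 2 * δ * n) / M ^ 2)) := (two_mul _).symm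
end
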